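/- Let A be an n×n Hermitian matrix and let u be a fixed vertex in ℤ/nℤ. Then A has universal perfect state transfer if and only if for every vertex v there exists t > 0 with |exp(−itA)_{v,u}| = 1, i.e., perfect state transfer occurs from u to every vertex of the graph. -/

import Mathlib

open Matrix Complex

/-- The continuous-time quantum walk `exp(-i t A)`. -/
noncomputable def qwalk {n : ℕ} [NeZero n] (A : Matrix (ZMod n) (ZMod n) ℂ) (t : ℝ) :
    Matrix (ZMod n) (ZMod n) ℂ :=
  NormedSpace.exp ((-(Complex.I * t)) • A)

/-- Perfect state transfer from `u` to `v` at time `t`: `|exp(-itA)_{v,u}| = 1`. -/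
def pst {n : ℕ} [NeZero n] (A : Matrix (ZMod n) (ZMod n) ℂ) (u v : ZMod n) (t : ℝ) : Prop :=
  ‖qwalk A t v u‖ = 1

/-- Universal perfect state transfer. -/
def upst {n : ℕ} [NeZero n] (A : Matrix (ZMod n) (ZMod n) ℂ) : Prop :=
  ∀ u v : ZMod n, ∃ t : ℝ, 0 < t ∧ pst A u v t

section Aux

variable {n : ℕ} [NeZero n] (A : Matrix (ZMod n) (ZMod n) ℂ)

lemma qwalk_add (s t : ℝ) : qwalk A (s + t) = qwalk A s * qwalk A t := by
  unfold qwalk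
  rw [← Matrix.exp_add_of_commute]
  · congr 1
    rw [← add_smul]
    congr 1
    push_cast
    ring
  · exact ((Commute.refl A).smul_left _).smul_right _

lemma qwalk_zero : qwalk A 0 = 1 := by
  unfold qwalk
  simp [NormedSpace.exp_zero]

lemma qwalk_unitary (hA : A.IsHermitian) (t : ℝ) : (qwalk A t)ᴴ * qwalk A t = 1 := by
  have h1 : (qwalk A t)ᴴ = qwalk A (-t) := by
    unfold qwalk
    rw [← Matrix.exp_conjTranspose]
    congr 1
    rw [conjTranspose_smul, hA.eq]
    congr 1
    simp [Complex.ext_iff]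
  rw [h1, ← qwalk_add, neg_add_cancel, qwalk_zero]

lemma col_eq_zero (hA : A.IsHermitian) {t : ℝ} {u v : ZMod n} (h : pst A u v t)
    {j : ZMod n} (hj : j ≠ v) : qwalk A t j u = 0 := by
  have hU := qwalk_unitary A hA t
  have h1 : ∑ k, Complex.normSq (qwalk A t k u) = 1 := by
    have h2 := congrFun (congrFun hU u) u
    simp only [Matrix.mul_apply, Matrix.one_apply_eq, Matrix.conjTranspose_apply] at h2
    have h3 : ∑ k, ((Complex.normSq (qwalk A t k u) : ℂ)) = 1 := by
      rw [← h2]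
      refine Finset.sum_congr rfl fun k _ => ?_
      rw [Complex.star_def, ← Complex.normSq_eq_conj_mul_self]
    exact_mod_cast h3
  have hv : Complex.normSq (qwalk A t v u) = 1 := by
    have : ‖qwalk A t v u‖ = 1 := h
    rw [← Complex.sq_norm, this, one_pow]
  have hrest : ∑ k ∈ Finset.univ.erase v, Complex.normSq (qwalk A t k u) = 0 := by
    have h4 := Finset.add_sum_erase Finset.univ (fun k => Complex.normSq (qwalk A t k u))
      (Finset.mem_univ v)
    linarith [h4, h1, hv]
  have hz : Complex.normSq (qwalk A t j u) = 0 := by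
    refine (Finset.sum_eq_zero_iff_of_nonneg fun k _ => Complex.normSq_nonneg _).mp hrest j ?_
    exact Finset.mem_erase.mpr ⟨hj, Finset.mem_univ j⟩
  exact Complex.normSq_eq_zero.mp hz

lemma entry_comp (hA : A.IsHermitian) {t : ℝ} {u v : ZMod n} (h : pst A u v t) (s : ℝ)
    (j : ZMod n) : qwalk A (s + t) j u = qwalk A s j v * qwalk A t v u := by
  rw [qwalk_add, Matrix.mul_apply]
  rw [Finset.sum_eq_single v]
  · intro k _ hk
    rw [col_eq_zero A hA h hk, mul_zero]
  · simp

lemma pst_nsmul (hA : A.IsHermitian) {t : ℝ} {u : ZMod n} (h : pst A u u t) (k : ℕ) :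
    pst A u u (k * t) := by
  induction k with
  | zero => simp [pst, qwalk_zero, Matrix.one_apply]
  | succ k ih =>
    have h2 := entry_comp A hA h ((k : ℝ) * t) u
    unfold pst at *
    push_cast
    rw [show ((k : ℝ) + 1) * t = (k : ℝ) * t + t by ring, h2, norm_mul, ih, h, mul_one]

end Aux

/-- A Hermitian matrix `A` has universal perfect state transfer iff perfect state
transfer occurs from a fixed vertex `u` to every vertex of the graph. -/
theorem stmt_1 {n : ℕ} [NeZero n] (A : Matrix (ZMod n) (ZMod n) ℂ)
    (hA : A.IsHermitian) (u : ZMod n) :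
    upst A ↔ ∀ v : ZMod n, ∃ t : ℝ, 0 < t ∧ pst A u v t := by
  constructor
  · intro h v
    exact h u v
  · intro h a b
    obtain ⟨ta, hta, ha⟩ := h a
    obtain ⟨tb, htb, hb⟩ := h b
    obtain ⟨tu, htu, hu'⟩ := h u
    obtain ⟨k, hk⟩ := exists_nat_gt ((ta - tb) / tu)
    have hkt : ta - tb < k * tu := by
      rwa [div_lt_iff₀ htu] at hk
    refine ⟨tb + k * tu - ta, by linarith, ?_⟩
    have h1 : qwalk A ((tb + k * tu - ta) + ta) b u
        = qwalk A (tb + k * tu - ta) b a * qwalk A ta a u := entry_comp A hA ha _ b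
    have h2 : qwalk A (tb + (k : ℝ) * tu) b u
        = qwalk A tb b u * qwalk A ((k : ℝ) * tu) u u :=
      entry_comp A hA (pst_nsmul A hA hu' k) tb b
    rw [show (tb + k * tu - ta) + ta = tb + (k : ℝ) * tu by ring] at h1
    have habs : ‖qwalk A (tb + (k : ℝ) * tu) b u‖ = 1 := by
      rw [h2, norm_mul, hb, pst_nsmul A hA hu' k, one_mul]
    rw [h1, norm_mul, ha, mul_one] at habs
    exact habs
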